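/- arXiv:0906.3901 — 4 statements merged into one kernel-verified Lean document; each statement's English description precedes it below -/
import Mathlib

section
/- Let V₀ be an abelian group and V = {f : ℤ → V₀ with finite support}. Define α : V → V by (α f)(n) = f(n-1), e_i : V → V by e_i(f)(j) = f(i) if j = i and 0 otherwise, q_i = Σ_{j ≤ i} e_j, E : V → V₀ by E(f) = Σ_i f(i), and φ : V₀ → V by φ(x)(0) = x, φ(x)(j) = 0 for j ≠ 0. Then for every f ∈ V, f - φ(E(f)) = (1 - α⁻¹)( -Σ_{j<0} α^{-j} q_j(f) + Σ_{j≥0} α^{-j}(1 - q_j)(f) ), where all sums are finite when applied to a fixed f. -/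
open Finsupp

/-- The shift automorphism `(α f)(n) = f (n-1)` on finitely supported functions `ℤ →₀ M`. -/
noncomputable def sh (M : Type*) [AddCommGroup M] : AddAut (ℤ →₀ M) :=
  (Finsupp.domCongr (Equiv.addRight (1:ℤ)) : (ℤ →₀ M) ≃+ (ℤ →₀ M))

/-- The sum-of-coordinates map `E : (ℤ →₀ M) → M`. -/
noncomputable def Esum (M : Type*) [AddCommGroup M] : (ℤ →₀ M) →+ M :=
  Finsupp.liftAddHom fun _ => AddMonoidHom.id M

/-- The inclusion `φ : M → (ℤ →₀ M)` at coordinate `0`. -/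
noncomputable def phi (M : Type*) [AddCommGroup M] : M →+ (ℤ →₀ M) :=
  Finsupp.singleAddHom (0:ℤ)

/-- The projection `e_i` onto coordinate `i`. -/
noncomputable def eproj (M : Type*) [AddCommGroup M] (i : ℤ) : (ℤ →₀ M) →+ (ℤ →₀ M) :=
  (Finsupp.singleAddHom i).comp (Finsupp.applyAddHom i)

/-- `q_i = ∑_{j ≤ i} e_j` : restriction to coordinates `≤ i`. -/
noncomputable def qproj (M : Type*) [AddCommGroup M] (i : ℤ) : (ℤ →₀ M) →+ (ℤ →₀ M) :=
  Finsupp.filterAddHom (fun j => j ≤ i)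

section
variable {V₀ : Type*} [AddCommGroup V₀] (W₀ : AddSubgroup V₀) (β₀ : W₀ →+ V₀)

/-- The inclusion of `W = ℤ →₀ W₀` into `V = ℤ →₀ V₀`. -/
noncomputable def iota : (ℤ →₀ W₀) →+ (ℤ →₀ V₀) :=
  Finsupp.mapRange.addMonoidHom W₀.subtype

/-- `β : W → V`, applying `β₀` coordinatewise. -/
noncomputable def betaMap : (ℤ →₀ W₀) →+ (ℤ →₀ V₀) :=
  Finsupp.mapRange.addMonoidHom β₀

/-- `(1 - αβ) : W → V`. -/
noncomputable def oneSubAlphaBeta : (ℤ →₀ W₀) →+ (ℤ →₀ V₀) :=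
  iota W₀ - ((sh V₀).toAddMonoidHom.comp (betaMap W₀ β₀))

/-- `I = (1 - αβ)(W) ⊆ V`. -/
noncomputable def Isub : AddSubgroup (ℤ →₀ V₀) :=
  (oneSubAlphaBeta W₀ β₀).range

end

/-! By additivity in `f` it suffices to take `f = single i x`, where the left side is
`single i x - single 0 x`. Then only one of the two tail sums survives, and it is a finite geometric
sum `∑_{k<n} α^{-k} y` (with `y = single 0 x`, `n = -i` if `i < 0`, and `y = single i x`, `n = i` if
`i > 0`), which `1 - α⁻¹` telescopes to `y - α^{-n} y`. -/

theorem AddAut.sum_range_zsmul_sub_apply {G : Type*} [AddCommGroup G] (σ : AddAut G) (y : G)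
    (n : ℕ) :
    (∑ k ∈ Finset.range n, ((k : ℤ) • σ) y) - σ (∑ k ∈ Finset.range n, ((k : ℤ) • σ) y) =
      y - ((n : ℤ) • σ) y := by
  have hstep (k : ℕ) : σ (((k : ℤ) • σ) y) = (((k + 1 : ℕ) : ℤ) • σ) y := by
    rw [Nat.cast_succ, add_comm, add_zsmul, one_zsmul, AddAut.add_apply]
  simp only [map_sum, hstep, ← Finset.sum_sub_distrib]
  simpa using Finset.sum_range_sub' (fun k : ℕ => ((k : ℤ) • σ) y) n

theorem finsum_mem_eq_sum_range {G : Type*} [AddCommMonoid G] {F : ℤ → G} {s : Set ℤ} (a : ℤ)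
    (n : ℕ) (hs : Set.Ico a (a + n) ⊆ s) (hF : ∀ j ∈ s, j ∉ Set.Ico a (a + n) → F j = 0) :
    ∑ᶠ j ∈ s, F j = ∑ k ∈ Finset.range n, F (a + k) := by
  rw [finsum_mem_eq_sum_of_subset (t := (Finset.range n).image fun k : ℕ => a + k)]
  · exact Finset.sum_image fun k _ l _ h => by simpa using h
  · rintro j ⟨hj, hFj⟩
    have hj' : j ∈ Set.Ico a (a + n) := by_contra fun h => hFj (hF j hj h)
    simp only [Set.mem_Ico] at hj'
    simp only [Finset.coe_image, Finset.coe_range, Set.mem_image, Set.mem_Iio]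
    exact ⟨(j - a).toNat, by omega, by omega⟩
  · simp only [Finset.coe_image, Finset.coe_range, Set.image_subset_iff]
    intro k hk
    exact hs ⟨by simp, by simpa using hk⟩

noncomputable def AddMonoidHom.finsumMem {ι V W : Type*} [AddCommMonoid V] [AddCommMonoid W]
    (s : Set ι) (F : ι → V →+ W) (hF : ∀ f, (s ∩ Function.support fun j => F j f).Finite) :
    V →+ W where
  toFun f := ∑ᶠ j ∈ s, F j f
  map_zero' := by simp
  map_add' f g := by simp only [map_add]; exact finsum_mem_add_distrib' (hF f) (hF g)

section Shift

variable {M : Type*} [AddCommGroup M]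

theorem zsmul_sh_single (n m : ℤ) (x : M) : (n • sh M) (single m x) = single (m + n) x := by
  have hsh (m : ℤ) : sh M (single m x) = single (m + 1) x := by simp [sh]
  have hneg (m : ℤ) : (-sh M) (single m x) = single (m - 1) x := by
    rw [AddAut.neg_apply, AddEquiv.symm_apply_eq, hsh, sub_add_cancel]
  induction n using Int.induction_on generalizing m with
  | zero => simp
  | succ k ih => rw [add_one_zsmul, AddAut.add_apply, hsh, ih]; ring_nf
  | pred k ih => rw [sub_one_zsmul, AddAut.add_apply, hneg, ih]; ring_nf

theorem zsmul_neg_sh_single (n m : ℤ) (x : M) : (n • -sh M) (single m x) = single (m - n) x := by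
  rw [zsmul_neg', zsmul_sh_single, sub_eq_add_neg]

theorem qproj_single_of_le {i j : ℤ} (h : i ≤ j) (x : M) : qproj M j (single i x) = single i x :=
  filter_single_of_pos _ h

theorem qproj_single_of_lt {i j : ℤ} (h : j < i) (x : M) : qproj M j (single i x) = 0 :=
  filter_single_of_neg _ (not_le.mpr h)

theorem qproj_eq_zero_of_lt {f : ℤ →₀ M} {m j : ℤ} (hm : m ∈ lowerBounds (f.support : Set ℤ))
    (hj : j < m) : qproj M j f = 0 := by
  refine (filter_eq_zero_iff _ f).mpr fun i (hi : i ≤ j) => ?_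
  by_contra h
  exact absurd (hm (mem_support_iff.mpr h)) (by omega)

theorem qproj_eq_self_of_le {f : ℤ →₀ M} {m j : ℤ} (hm : m ∈ upperBounds (f.support : Set ℤ))
    (hj : m ≤ j) : qproj M j f = f :=
  (filter_eq_self_iff _ f).mpr fun _ hi => (hm (mem_support_iff.mpr hi)).trans hj

end Shift

section TailSums

variable (M : Type*) [AddCommGroup M]

theorem finite_negTail_support (f : ℤ →₀ M) :
    ({j : ℤ | j < 0} ∩ Function.support fun j => ((-j) • sh M) (qproj M j f)).Finite := by
  obtain ⟨m, hm⟩ := f.support.bddBelow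
  refine (Set.finite_Ico m 0).subset fun j ⟨hj, hFj⟩ => ⟨not_lt.mp fun hjm => hFj ?_, hj⟩
  simp [qproj_eq_zero_of_lt hm hjm]

theorem finite_nonnegTail_support (f : ℤ →₀ M) :
    ({j : ℤ | 0 ≤ j} ∩ Function.support fun j => ((-j) • sh M) (f - qproj M j f)).Finite := by
  obtain ⟨m, hm⟩ := f.support.bddAbove
  refine (Set.finite_Ico 0 m).subset fun j ⟨hj, hFj⟩ => ⟨hj, not_le.mp fun hjm => hFj ?_⟩
  simp [qproj_eq_self_of_le hm hjm]

noncomputable def negTailSum : (ℤ →₀ M) →+ (ℤ →₀ M) :=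
  AddMonoidHom.finsumMem {j | j < 0} (fun j => ((-j) • sh M).toAddMonoidHom.comp (qproj M j))
    (finite_negTail_support M)

noncomputable def nonnegTailSum : (ℤ →₀ M) →+ (ℤ →₀ M) :=
  AddMonoidHom.finsumMem {j | 0 ≤ j}
    (fun j => ((-j) • sh M).toAddMonoidHom.comp (AddMonoidHom.id _ - qproj M j))
    (finite_nonnegTail_support M)

variable {M}

theorem negTailSum_apply (f : ℤ →₀ M) :
    negTailSum M f = ∑ᶠ j ∈ {j : ℤ | j < 0}, ((-j) • sh M) (qproj M j f) :=
  rfl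

theorem nonnegTailSum_apply (f : ℤ →₀ M) :
    nonnegTailSum M f = ∑ᶠ j ∈ {j : ℤ | 0 ≤ j}, ((-j) • sh M) (f - qproj M j f) :=
  rfl

theorem negTailSum_single_neg (n : ℕ) (x : M) :
    negTailSum M (single (-n) x) = ∑ k ∈ Finset.range n, ((k : ℤ) • -sh M) (single 0 x) := by
  rw [negTailSum_apply, finsum_mem_eq_sum_range (-n) n (fun j hj => by simp at hj ⊢; omega)]
  · refine Finset.sum_congr rfl fun k hk => ?_
    rw [qproj_single_of_le (by omega), zsmul_sh_single, zsmul_neg_sh_single]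
    ring_nf
  · intro j hj hjn
    simp only [Set.mem_ofPred_eq, Set.mem_Ico, not_and_or, not_le, not_lt] at hj hjn
    rw [qproj_single_of_lt (by omega), map_zero]

theorem negTailSum_single_of_nonneg {i : ℤ} (hi : 0 ≤ i) (x : M) :
    negTailSum M (single i x) = 0 := by
  rw [negTailSum_apply]
  refine finsum_mem_of_eqOn_zero fun j (hj : j < 0) => ?_
  rw [Pi.zero_apply, qproj_single_of_lt (by omega), map_zero]

theorem nonnegTailSum_single_natCast (n : ℕ) (x : M) :
    nonnegTailSum M (single n x) = ∑ k ∈ Finset.range n, ((k : ℤ) • -sh M) (single n x) := by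
  rw [nonnegTailSum_apply, finsum_mem_eq_sum_range 0 n (fun j hj => by simp at hj ⊢; omega)]
  · refine Finset.sum_congr rfl fun k hk => ?_
    rw [Finset.mem_range] at hk
    rw [qproj_single_of_lt (by omega), sub_zero, zero_add, neg_zsmul, ← zsmul_neg]
  · intro j hj hjn
    simp only [Set.mem_ofPred_eq, Set.mem_Ico, not_and_or, not_le, not_lt] at hj hjn
    rw [qproj_single_of_le (by omega), sub_self, map_zero]

theorem nonnegTailSum_single_of_nonpos {i : ℤ} (hi : i ≤ 0) (x : M) :
    nonnegTailSum M (single i x) = 0 := by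
  rw [nonnegTailSum_apply]
  refine finsum_mem_of_eqOn_zero fun j (hj : 0 ≤ j) => ?_
  rw [Pi.zero_apply, qproj_single_of_le (by omega), sub_self, map_zero]

theorem single_sub_single_zero_eq_tailSums (i : ℤ) (x : M) :
    single i x - single 0 x =
      (-negTailSum M (single i x) + nonnegTailSum M (single i x)) -
        (-sh M) (-negTailSum M (single i x) + nonnegTailSum M (single i x)) := by
  obtain ⟨n, rfl | rfl⟩ := i.eq_nat_or_neg
  · rw [negTailSum_single_of_nonneg n.cast_nonneg, nonnegTailSum_single_natCast, neg_zero,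
      zero_add, AddAut.sum_range_zsmul_sub_apply, zsmul_neg_sh_single, sub_self]
  · have h := AddAut.sum_range_zsmul_sub_apply (-sh M) (single 0 x) n
    rw [zsmul_neg_sh_single, zero_sub] at h
    rw [negTailSum_single_neg, nonnegTailSum_single_of_nonpos (by simp), add_zero, map_neg,
      neg_sub_neg, ← neg_sub, ← h, neg_sub]

end TailSums

/-- Telescoping identity: . -/
theorem stmt0 {V₀ : Type*} [AddCommGroup V₀] (f : ℤ →₀ V₀) :
    f - phi V₀ (Esum V₀ f) =
      (fun g => g - (-(sh V₀)) g)
        ((-∑ᶠ j ∈ {j : ℤ | j < 0}, ((-j) • sh V₀) (qproj V₀ j f)) +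
          ∑ᶠ j ∈ {j : ℤ | 0 ≤ j}, ((-j) • sh V₀) (f - qproj V₀ j f)) := by
  have key : AddMonoidHom.id _ - (phi V₀).comp (Esum V₀) =
      (AddMonoidHom.id _ - (-sh V₀).toAddMonoidHom).comp (-negTailSum V₀ + nonnegTailSum V₀) :=
    Finsupp.addHom_ext fun i x => by
      simpa [phi, Esum] using single_sub_single_zero_eq_tailSums i x
  exact DFunLike.congr_fun key f
end

section
/- With V₀, W₀, β₀, V, W, α, β, E, φ as above, set I = (1 - αβ)(W) ⊆ V. If g ∈ V and h ∈ W satisfy (1 - α⁻¹)g = (1 - αβ)h, then g + φ(E(h)) ∈ I, where φ : V₀ → V places an element in coordinate 0. -/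
/-!
Applying `E` to the hypothesis gives `β₀ (E h) = E h`, since `E` kills the image of `1 - α⁻¹`
and `E ((1 - αβ) h) = E h - β₀ (E h)`. The operator `1 - α⁻¹` is injective on `V`, commutes
with `1 - αβ`, and its image contains `f - single j (E f)` for every `f`. Choosing `w` with
`(1 - α⁻¹) w = h - single (-1) (E h)`, the elements `(1 - αβ) w` and `g + φ (E h)` then have
the same image under `1 - α⁻¹`, so they are equal.
-/

open Finsupp

section Shift
variable {M N : Type*} [AddCommGroup M] [AddCommGroup N]

lemma sh_apply (f : ℤ →₀ M) (n : ℤ) : sh M f n = f (n - 1) := by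
  simp [sh, sub_eq_add_neg]

lemma neg_sh_apply (f : ℤ →₀ M) (n : ℤ) : (-sh M) f n = f (n + 1) := by
  simp [sh, AddAut.neg_apply, Finsupp.domCongr_symm]

lemma sh_single (k : ℤ) (x : M) : sh M (single k x) = single (k + 1) x := by
  simp [sh]

lemma neg_sh_single (k : ℤ) (x : M) : (-sh M) (single k x) = single (k - 1) x := by
  simp [sh, AddAut.neg_apply, Finsupp.domCongr_symm, sub_eq_add_neg]

lemma Esum_apply (f : ℤ →₀ M) : Esum M f = f.sum fun _ x => x := by
  rw [Esum, liftAddHom_apply]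
  rfl

lemma Esum_single (k : ℤ) (x : M) : Esum M (single k x) = x := by
  simp [Esum]

lemma Esum_sh (f : ℤ →₀ M) : Esum M (sh M f) = Esum M f := by
  rw [Esum_apply, Esum_apply, sh, Finsupp.domCongr_apply, Finsupp.sum_equivMapDomain]

lemma Esum_neg_sh (f : ℤ →₀ M) : Esum M ((-sh M) f) = Esum M f := by
  rw [← Esum_sh, AddAut.apply_neg_self]

lemma Esum_mapRange (φ : M →+ N) (f : ℤ →₀ M) :
    Esum N (Finsupp.mapRange.addMonoidHom φ f) = φ (Esum M f) := by
  simp [Esum_apply, Finsupp.sum_mapRange_index, map_finsuppSum]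

end Shift

noncomputable def oneSubAlphaInv (M : Type*) [AddCommGroup M] : (ℤ →₀ M) →+ (ℤ →₀ M) :=
  AddMonoidHom.id _ - (-sh M).toAddMonoidHom

section OneSubAlphaInv
variable {M : Type*} [AddCommGroup M]

lemma oneSubAlphaInv_apply (f : ℤ →₀ M) : oneSubAlphaInv M f = f - (-sh M) f := rfl

lemma oneSubAlphaInv_single (k : ℤ) (x : M) :
    oneSubAlphaInv M (single k x) = single k x - single (k - 1) x := by
  rw [oneSubAlphaInv_apply, neg_sh_single]

lemma oneSubAlphaInv_injective : Function.Injective (oneSubAlphaInv M) := by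
  refine (injective_iff_map_eq_zero _).mpr fun f hf => ?_
  rw [oneSubAlphaInv_apply, sub_eq_zero] at hf
  by_contra hne
  have hs : f.support.Nonempty := Finsupp.support_nonempty_iff.mpr hne
  have hstep : f (f.support.max' hs + 1) = f (f.support.max' hs) := by
    rw [← neg_sh_apply, ← hf]
  have hmem : f.support.max' hs + 1 ∈ f.support := by
    rw [Finsupp.mem_support_iff, hstep, ← Finsupp.mem_support_iff]
    exact f.support.max'_mem hs
  have hle := f.support.le_max' _ hmem
  omega

lemma single_sub_single_mem_range_oneSubAlphaInv (k j : ℤ) (x : M) :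
    single k x - single j x ∈ (oneSubAlphaInv M).range := by
  induction k using Int.inductionOn' (b := j) with
  | zero => simp
  | succ k _ ih =>
    have hk : single (k + 1) x - single k x ∈ (oneSubAlphaInv M).range :=
      ⟨single (k + 1) x, by rw [oneSubAlphaInv_single, add_sub_cancel_right]⟩
    simpa using add_mem hk ih
  | pred k _ ih =>
    have hk : single k x - single (k - 1) x ∈ (oneSubAlphaInv M).range :=
      ⟨single k x, oneSubAlphaInv_single k x⟩
    simpa using sub_mem ih hk

lemma sub_single_Esum_mem_range_oneSubAlphaInv (j : ℤ) (f : ℤ →₀ M) :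
    f - single j (Esum M f) ∈ (oneSubAlphaInv M).range := by
  induction f using Finsupp.induction_linear with
  | zero => simp
  | add f g hf hg =>
    rw [map_add, single_add]
    convert add_mem hf hg using 1
    abel
  | single k x => rw [Esum_single]; exact single_sub_single_mem_range_oneSubAlphaInv k j x

end OneSubAlphaInv

section OneSubAlphaBeta
variable {V₀ : Type*} [AddCommGroup V₀] (W₀ : AddSubgroup V₀) (β₀ : W₀ →+ V₀)

lemma oneSubAlphaBeta_apply (v : ℤ →₀ W₀) (n : ℤ) :
    oneSubAlphaBeta W₀ β₀ v n = (v n : V₀) - β₀ (v (n - 1)) := by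
  simp [oneSubAlphaBeta, iota, betaMap, sh_apply]

lemma oneSubAlphaBeta_single (k : ℤ) (x : W₀) :
    oneSubAlphaBeta W₀ β₀ (single k x) = single k (x : V₀) - single (k + 1) (β₀ x) := by
  simp [oneSubAlphaBeta, iota, betaMap, sh_single]

lemma oneSubAlphaInv_oneSubAlphaBeta (v : ℤ →₀ W₀) :
    oneSubAlphaInv V₀ (oneSubAlphaBeta W₀ β₀ v) =
      oneSubAlphaBeta W₀ β₀ (oneSubAlphaInv W₀ v) := by
  ext n
  simp only [oneSubAlphaInv_apply, map_sub, Finsupp.sub_apply, oneSubAlphaBeta_apply,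
    neg_sh_apply, add_sub_cancel_right, sub_add_cancel]

lemma Esum_oneSubAlphaBeta (v : ℤ →₀ W₀) :
    Esum V₀ (oneSubAlphaBeta W₀ β₀ v) = (Esum W₀ v : V₀) - β₀ (Esum W₀ v) := by
  simp only [oneSubAlphaBeta, iota, betaMap, AddMonoidHom.sub_apply, AddMonoidHom.comp_apply,
    AddEquiv.coe_toAddMonoidHom, map_sub, Esum_sh, Esum_mapRange, AddSubgroup.coe_subtype]

lemma apply_Esum_eq_of_oneSubAlphaInv_eq {g : ℤ →₀ V₀} {h : ℤ →₀ W₀}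
    (hgh : oneSubAlphaInv V₀ g = oneSubAlphaBeta W₀ β₀ h) :
    β₀ (Esum W₀ h) = Esum W₀ h := by
  have := congrArg (Esum V₀) hgh
  rw [oneSubAlphaInv_apply, map_sub, Esum_neg_sh, sub_self, Esum_oneSubAlphaBeta] at this
  exact (sub_eq_zero.mp this.symm).symm

end OneSubAlphaBeta

/-- If  then . -/
theorem stmt2 {V₀ : Type*} [AddCommGroup V₀] (W₀ : AddSubgroup V₀) (β₀ : W₀ →+ V₀)
    (g : ℤ →₀ V₀) (h : ℤ →₀ W₀)
    (hyp : g - (-(sh V₀)) g = oneSubAlphaBeta W₀ β₀ h) :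
    g + phi V₀ ((Esum W₀ h : W₀) : V₀) ∈ Isub W₀ β₀ := by
  set e := Esum W₀ h
  have hfix : β₀ e = e := apply_Esum_eq_of_oneSubAlphaInv_eq W₀ β₀ hyp
  obtain ⟨w, hw⟩ := sub_single_Esum_mem_range_oneSubAlphaInv (-1) h
  refine ⟨w, oneSubAlphaInv_injective ?_⟩
  calc oneSubAlphaInv V₀ (oneSubAlphaBeta W₀ β₀ w)
      = oneSubAlphaBeta W₀ β₀ h - oneSubAlphaBeta W₀ β₀ (single (-1) e) := by
        rw [oneSubAlphaInv_oneSubAlphaBeta, hw, map_sub]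
    _ = oneSubAlphaInv V₀ (g + phi V₀ e) := by
        rw [map_add, oneSubAlphaInv_apply g, hyp, oneSubAlphaBeta_single, hfix, phi,
          singleAddHom_apply, oneSubAlphaInv_single, neg_add_cancel, zero_sub]
        abel
end

section
/- With V₀, W₀, β₀, V, W, α, β, φ, I as above: if x ∈ W₀ satisfies β₀(x) = x (as an element of V₀, with x ∈ W₀) and φ(x) ∈ I = (1 - αβ)(W), then x = 0. -/
open Finsupp

/-
If `φ x = (1 - αβ) h`, then `h i = β₀ (h (i - 1))` for `i ≠ 0` and `h 0 = x + β₀ (h (-1))`.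
Since `β₀ 0 = 0` and `h` vanishes far to the left, `h` vanishes at every negative index, so
`h 0 = x`; as `β₀ x = x`, the recursion then gives `h i = x` for all `i ≥ 0`, and `h` vanishing
far to the right forces `x = 0`.
-/

open Filter

theorem Finsupp.eventually_cofinite_eq_zero {α M : Type*} [Zero M] (f : α →₀ M) :
    ∀ᶠ a in cofinite, f a = 0 :=
  f.support.eventually_cofinite_notMem.mono fun _ => Finsupp.notMem_support_iff.1

theorem Int.forall_le_of_eventually_atBot_of_succ {P : ℤ → Prop} {n : ℤ}
    (hbot : ∀ᶠ i in atBot, P i) (hsucc : ∀ i < n, P i → P (i + 1)) : ∀ i ≤ n, P i := by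
  obtain ⟨m, hm⟩ := eventually_atBot.1 hbot
  intro i hin
  rcases le_total i m with him | hmi
  · exact hm i him
  induction i, hmi using Int.leInduction with
  | base => exact hm m le_rfl
  | succ k hmk ih => exact hsucc k (by omega) (ih (by omega))

theorem oneSubAlphaBeta_apply_s3 {V₀ : Type*} [AddCommGroup V₀] (W₀ : AddSubgroup V₀)
    (β₀ : W₀ →+ V₀) (h : ℤ →₀ W₀) (i : ℤ) :
    oneSubAlphaBeta W₀ β₀ h i = h i - β₀ (h (i - 1)) := by
  simp [oneSubAlphaBeta, iota, betaMap, sh, Finsupp.domCongr_apply, sub_eq_add_neg]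

/-- If ,  and , then . -/
theorem stmt3 {V₀ : Type*} [AddCommGroup V₀] (W₀ : AddSubgroup V₀) (β₀ : W₀ →+ V₀)
    (x : W₀) (hx : β₀ x = (x : V₀)) (hmem : phi V₀ (x : V₀) ∈ Isub W₀ β₀) :
    x = 0 := by
  obtain ⟨h, hh⟩ := hmem
  have hrec : ∀ i, (h (i + 1) : V₀) = β₀ (h i) + Finsupp.single 0 (x : V₀) (i + 1) := by
    intro i
    have := DFunLike.congr_fun hh (i + 1)
    rwa [oneSubAlphaBeta_apply_s3, add_sub_cancel_right, sub_eq_iff_eq_add'] at this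
  have hbot : ∀ᶠ i in atBot, h i = 0 :=
    h.eventually_cofinite_eq_zero.filter_mono atBot_le_cofinite
  have htop : ∀ᶠ i in atTop, h i = 0 :=
    h.eventually_cofinite_eq_zero.filter_mono atTop_le_cofinite
  have hneg : ∀ i ≤ -1, h i = 0 :=
    Int.forall_le_of_eventually_atBot_of_succ hbot fun i hi hzero => by
      simpa [hzero, show i + 1 ≠ 0 by omega] using hrec i
  have hpos : ∀ᶠ i in atTop, h i = x := by
    refine eventually_atTop.2 ⟨0, fun i hi => ?_⟩
    induction i, hi using Int.leInduction with
    | base => simpa [hneg (-1) le_rfl] using hrec (-1)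
    | succ k hk ih => exact Subtype.ext (by simpa [ih, hx, show k + 1 ≠ 0 by omega] using hrec k)
  obtain ⟨i, hix, hi0⟩ := (hpos.and htop).exists
  exact hix.symm.trans hi0
end

section
/- Let V₀ be an abelian group, W₀ ≤ V₀, β₀ : W₀ → V₀ additive, with V, W, α, β, φ, I as above. Suppose x ∈ ker(1-β₀) ⊆ W₀ (so β₀ x = x) and h ∈ W satisfies h(i) - β₀(h(i-1)) = 0 for all i ≠ 0 and h(0) - β₀(h(-1)) = x (i.e. φ(x) = (1-αβ)h). Then h(i) = 0 for all i < 0 and h(i) = x for all i ≥ 0; since h has finite support, x = 0 and h = 0. -/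
open Finsupp

/-- If  and  coordinatewise, then  vanishes
below , equals  from  on, and , . -/
theorem stmt17 {V₀ : Type*} [AddCommGroup V₀] (W₀ : AddSubgroup V₀) (β₀ : W₀ →+ V₀)
    (x : W₀) (hx : β₀ x = (x : V₀)) (h : ℤ →₀ W₀)
    (h1 : ∀ i : ℤ, i ≠ 0 → ((h i : V₀) - β₀ (h (i-1)) = 0))
    (h2 : (h 0 : V₀) - β₀ (h (-1)) = (x : V₀)) :
    (∀ i : ℤ, i < 0 → h i = 0) ∧ (∀ i : ℤ, 0 ≤ i → h i = x) ∧ x = 0 ∧ h = 0 := by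
  have hinj : Function.Injective (fun w : W₀ => (w : V₀)) := Subtype.coe_injective
  -- a lower bound below the support
  obtain ⟨n, hn⟩ : ∃ n : ℤ, ∀ m ≤ n, h m = 0 := by
    rcases h.support.eq_empty_or_nonempty with hs | hs
    · exact ⟨0, fun m _ => Finsupp.notMem_support_iff.mp (by simp [hs])⟩
    · refine ⟨h.support.min' hs - 1, fun m hm => Finsupp.notMem_support_iff.mp ?_⟩
      intro hmem
      have := h.support.min'_le m hmem
      omega
  -- an upper bound above the support
  obtain ⟨N, hN0, hN⟩ : ∃ N : ℤ, 0 ≤ N ∧ h N = 0 := by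
    rcases h.support.eq_empty_or_nonempty with hs | hs
    · exact ⟨0, le_refl 0, Finsupp.notMem_support_iff.mp (by simp [hs])⟩
    · refine ⟨max 0 (h.support.max' hs + 1), le_max_left _ _,
        Finsupp.notMem_support_iff.mp ?_⟩
      intro hmem
      have := h.support.le_max' _ hmem
      have := le_max_right 0 (h.support.max' hs + 1)
      omega
  have hneg : ∀ i : ℤ, i < 0 → h i = 0 := by
    have key : ∀ k : ℕ, (n + k : ℤ) < 0 → h (n + k) = 0 := by
      intro k
      induction k with
      | zero => intro _; simpa using hn n le_rfl
      | succ k ih =>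
        intro hk
        have hne : (n + (k + 1 : ℕ) : ℤ) ≠ 0 := by omega
        have := h1 _ hne
        have hsub : (n + (k + 1 : ℕ) : ℤ) - 1 = n + k := by push_cast; ring
        rw [hsub] at this
        have hk' : (n + k : ℤ) < 0 := by push_cast at hk ⊢; omega
        rw [ih hk'] at this
        apply hinj
        push_cast at this ⊢
        simpa using this
    intro i hi
    rcases le_or_gt i n with hle | hlt
    · exact hn i hle
    · have : i = n + ((i - n).toNat : ℤ) := by omega
      rw [this]
      exact key _ (by omega)
  have h0 : h 0 = x := by
    apply hinj
    have : h (-1) = 0 := hneg (-1) (by norm_num)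
    rw [this] at h2
    simpa using h2
  have hpos : ∀ k : ℕ, h (k : ℤ) = x := by
    intro k
    induction k with
    | zero => exact h0
    | succ k ih =>
      apply hinj
      have hne : ((k + 1 : ℕ) : ℤ) ≠ 0 := by positivity
      have := h1 _ hne
      have hsub : ((k + 1 : ℕ) : ℤ) - 1 = (k : ℤ) := by push_cast; ring
      rw [hsub, ih, hx, sub_eq_zero] at this
      exact this
  have hnn : ∀ i : ℤ, 0 ≤ i → h i = x := by
    intro i hi
    have : i = (i.toNat : ℤ) := by omega
    rw [this]; exact hpos _
  have hx0 : x = 0 := by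
    have := hnn N hN0
    rw [hN] at this; exact this.symm
  refine ⟨hneg, hnn, hx0, ?_⟩
  ext i
  rcases lt_or_ge i 0 with hi | hi
  · simp [hneg i hi]
  · simp [hnn i hi, hx0]
end
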